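/- Let f_0,...,f_{m-1} be continuous self-maps of a compact metric space (X,d) and φ continuous on X. Then lim_{r→0} P^s_r(f_0,...,f_{m-1},φ) = P(f_0,...,f_{m-1},φ), where P^s_r is the topological r-pressure defined via separated sets. -/

import Mathlib

open Filter Topology

section FSG

variable {X : Type*}

/-- Apply the maps of the free semigroup action along a word; the first letter of the
list is applied first. -/
def fw {ι : Type*} (f : ι → X → X) (w : List ι) (x : X) : X :=
  w.foldl (fun y a => f a y) x

/-- The Birkhoff-type sum `(S_w φ)(x) = ∑_{w' ≤ w} φ(f_{w'} x)`. -/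
noncomputable def Sw {ι : Type*} (f : ι → X → X) (φ : X → ℝ) (w : List ι) (x : X) : ℝ :=
  ∑ i ∈ Finset.range w.length, φ (fw f (w.take i) x)

variable [MetricSpace X]

/-- `F` is a `(w, ε, r)`-spanning set for the free semigroup action. -/
def rSpan {ι : Type*} (f : ι → X → X) (w : List ι) (ε r : ℝ) (F : Finset X) : Prop :=
  ∀ x : X, ∃ y ∈ F, (1 - r) * w.length <
    (((Finset.range w.length).filter
      (fun i => dist (fw f (w.take i) x) (fw f (w.take i) y) < ε)).card : ℝ)

/-- `E` is a `(w, ε, r)`-separated set for the free semigroup action. -/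
def rSep {ι : Type*} (f : ι → X → X) (w : List ι) (ε r : ℝ) (E : Finset X) : Prop :=
  ∀ x ∈ E, ∀ y ∈ E, x ≠ y → r * w.length <
    (((Finset.range w.length).filter
      (fun i => ε ≤ dist (fw f (w.take i) x) (fw f (w.take i) y))).card : ℝ)

/-- `Q_w(f_0,…,f_{m-1},φ,ε,r)` (spanning-set version). -/
noncomputable def Qw {ι : Type*} (f : ι → X → X) (φ : X → ℝ) (w : List ι) (ε r : ℝ) : ℝ :=
  sInf {s : ℝ | ∃ F : Finset X, rSpan f w ε r F ∧ s = ∑ x ∈ F, Real.exp (Sw f φ w x)}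

/-- `Q_w^s(f_0,…,f_{m-1},φ,ε,r)` (separated-set version). -/
noncomputable def Qws {ι : Type*} (f : ι → X → X) (φ : X → ℝ) (w : List ι) (ε r : ℝ) : ℝ :=
  sSup {s : ℝ | ∃ E : Finset X, rSep f w ε r E ∧ s = ∑ x ∈ E, Real.exp (Sw f φ w x)}

/-- `Q_n(f_0,…,f_{m-1},φ,ε,r) = (1/m^n) ∑_{|w|=n} Q_w`. -/
noncomputable def Qn {ι : Type*} [Fintype ι] (f : ι → X → X) (φ : X → ℝ)
    (n : ℕ) (ε r : ℝ) : ℝ :=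
  (1 / (Fintype.card ι : ℝ) ^ n) * ∑ σ : Fin n → ι, Qw f φ (List.ofFn σ) ε r

/-- `Q_n^s(f_0,…,f_{m-1},φ,ε,r) = (1/m^n) ∑_{|w|=n} Q_w^s`. -/
noncomputable def Qns {ι : Type*} [Fintype ι] (f : ι → X → X) (φ : X → ℝ)
    (n : ℕ) (ε r : ℝ) : ℝ :=
  (1 / (Fintype.card ι : ℝ) ^ n) * ∑ σ : Fin n → ι, Qws f φ (List.ofFn σ) ε r

/-- The topological `r`-pressure of the free semigroup action (spanning sets);
the limit as `ε → 0` is realised as a supremum over `ε > 0`, the quantity being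
monotone in `ε`. -/
noncomputable def Pr {ι : Type*} [Fintype ι] (f : ι → X → X) (φ : X → ℝ) (r : ℝ) : EReal :=
  ⨆ ε ∈ Set.Ioi (0 : ℝ), atTop.limsup fun n : ℕ =>
    (((n : ℝ)⁻¹ * Real.log (Qn f φ n ε r) : ℝ) : EReal)

/-- `P^s_r(f_0,…,f_{m-1},φ,ε)`, the fixed-`ε` separated-set `r`-pressure. -/
noncomputable def Pse {ι : Type*} [Fintype ι] (f : ι → X → X) (φ : X → ℝ) (ε r : ℝ) : EReal :=
  atTop.limsup fun n : ℕ => (((n : ℝ)⁻¹ * Real.log (Qns f φ n ε r) : ℝ) : EReal)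

/-- The topological `r`-pressure of the free semigroup action (separated sets). -/
noncomputable def Ps {ι : Type*} [Fintype ι] (f : ι → X → X) (φ : X → ℝ) (r : ℝ) : EReal :=
  ⨆ ε ∈ Set.Ioi (0 : ℝ), Pse f φ ε r

/-- Liminf variant of the separated-set topological `r`-pressure. -/
noncomputable def PsInf {ι : Type*} [Fintype ι] (f : ι → X → X) (φ : X → ℝ) (r : ℝ) : EReal :=
  ⨆ ε ∈ Set.Ioi (0 : ℝ), atTop.liminf fun n : ℕ =>
    (((n : ℝ)⁻¹ * Real.log (Qns f φ n ε r) : ℝ) : EReal)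

/-- `F` is a `(w, ε)`-spanning set for the Bowen metric `d_w` of the free semigroup action. -/
def span0 {ι : Type*} (f : ι → X → X) (w : List ι) (ε : ℝ) (F : Finset X) : Prop :=
  ∀ x : X, ∃ y ∈ F, ∀ i < w.length,
    dist (fw f (w.take i) x) (fw f (w.take i) y) ≤ ε

/-- `E` is a `(w, ε)`-separated set for the Bowen metric `d_w`. -/
def sep0 {ι : Type*} (f : ι → X → X) (w : List ι) (ε : ℝ) (E : Finset X) : Prop :=
  ∀ x ∈ E, ∀ y ∈ E, x ≠ y → ∃ i < w.length,
    ε < dist (fw f (w.take i) x) (fw f (w.take i) y)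

noncomputable def Qw0 {ι : Type*} (f : ι → X → X) (φ : X → ℝ) (w : List ι) (ε : ℝ) : ℝ :=
  sInf {s : ℝ | ∃ F : Finset X, span0 f w ε F ∧ s = ∑ x ∈ F, Real.exp (Sw f φ w x)}

noncomputable def Qws0 {ι : Type*} (f : ι → X → X) (φ : X → ℝ) (w : List ι) (ε : ℝ) : ℝ :=
  sSup {s : ℝ | ∃ E : Finset X, sep0 f w ε E ∧ s = ∑ x ∈ E, Real.exp (Sw f φ w x)}

noncomputable def Qn0 {ι : Type*} [Fintype ι] (f : ι → X → X) (φ : X → ℝ) (n : ℕ) (ε : ℝ) : ℝ :=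
  (1 / (Fintype.card ι : ℝ) ^ n) * ∑ σ : Fin n → ι, Qw0 f φ (List.ofFn σ) ε

noncomputable def Qns0 {ι : Type*} [Fintype ι] (f : ι → X → X) (φ : X → ℝ) (n : ℕ) (ε : ℝ) : ℝ :=
  (1 / (Fintype.card ι : ℝ) ^ n) * ∑ σ : Fin n → ι, Qws0 f φ (List.ofFn σ) ε

/-- The topological pressure of the free semigroup action. -/
noncomputable def P0 {ι : Type*} [Fintype ι] (f : ι → X → X) (φ : X → ℝ) : EReal :=
  ⨆ ε ∈ Set.Ioi (0 : ℝ), atTop.limsup fun n : ℕ =>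
    (((n : ℝ)⁻¹ * Real.log (Qn0 f φ n ε) : ℝ) : EReal)

/-- `r_w(ε,r)`: the smallest cardinality of a `(w,ε,r)`-spanning set. -/
noncomputable def rSpanCard {ι : Type*} (f : ι → X → X) (w : List ι) (ε r : ℝ) : ℕ :=
  sInf {k : ℕ | ∃ F : Finset X, rSpan f w ε r F ∧ F.card = k}

/-- The topological `r`-entropy of the free semigroup action. -/
noncomputable def hrEnt {ι : Type*} [Fintype ι] (f : ι → X → X) (r : ℝ) : EReal :=
  ⨆ ε ∈ Set.Ioi (0 : ℝ), atTop.limsup fun n : ℕ =>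
    (((n : ℝ)⁻¹ * Real.log ((1 / (Fintype.card ι : ℝ) ^ n) *
      ∑ σ : Fin n → ι, (rSpanCard f (List.ofFn σ) ε r : ℝ)) : ℝ) : EReal)

end FSG

/-!
A `(w, ε, r)`-separated set with `r ≥ 0` is Bowen `(w, 2δ)`-separated for `2δ < ε`, so sending
each of its points to a `δ`-close point of a Bowen `(w, δ)`-spanning set is injective; by
uniform continuity of `φ` this costs a factor `e^{|w| η}`, whence `P^s_r ≤ P` for every `r ≥ 0`.

Conversely, a maximal Bowen `(w, ε)`-separated set `E` is spanning. Greedily thinning `E` to a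
`(w, ε/2, r)`-separated subset loses at most the number of points of `E` that are `ε/2`-close
to a fixed one except at `≤ r|w|` times. Such points are determined by the cells of a finite
partition of diameter `ε` (say with `K` cells) that they visit at those exceptional times, and
there are at most `t^{r|w|} (1 + K/t)^{|w|} ≤ e^{|w| η}` such codes once `t` is large and `r` is
small. Hence `P ≤ sup_{r > 0} P^s_r`, and since `P^s_r` decreases in `r` it tends to this
supremum as `r → 0⁺`.

If `X` is empty or there are no maps, every `Q` vanishes for `n ≥ 1` and, as `log 0 = 0`, both
sides are `0`.
-/

open Finset Real

theorem EReal.le_of_forall_pos_le_coe_add {x y : EReal} (h : ∀ η : ℝ, 0 < η → x ≤ η + y) :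
    x ≤ y := by
  refine EReal.le_of_forall_lt_iff_le.1 fun z hz => ?_
  induction y using EReal.rec with
  | bot => exact (h 1 one_pos).trans (by simp)
  | coe b =>
    have := h (z - b) (by linarith [EReal.coe_lt_coe_iff.1 hz])
    rwa [← EReal.coe_add, _root_.sub_add_cancel] at this
  | top => exact absurd hz (not_lt.2 le_top)

/-- `Pse f φ ε r` is `growthRate (Qns f φ · ε r)`, and `P0` is a supremum of growth rates. -/
noncomputable def growthRate (a : ℕ → ℝ) : EReal :=
  atTop.limsup fun n : ℕ => (((n : ℝ)⁻¹ * log (a n) : ℝ) : EReal)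

theorem growthRate_le_add {a b : ℕ → ℝ} {η : ℝ} (ha : ∀ n, 0 < a n)
    (h : ∀ n : ℕ, a n ≤ exp (n * η) * b n) : growthRate a ≤ η + growthRate b := by
  have hev : ∀ᶠ n : ℕ in atTop, (((n : ℝ)⁻¹ * log (a n) : ℝ) : EReal) ≤
      (η : EReal) + (((n : ℝ)⁻¹ * log (b n) : ℝ) : EReal) := by
    filter_upwards [eventually_ge_atTop 1] with n hn
    have hn0 : (0 : ℝ) < n := by exact_mod_cast hn
    have hb : 0 < b n := pos_of_mul_pos_right ((ha n).trans_le (h n)) (exp_pos _).le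
    have hlog := log_le_log (ha n) (h n)
    rw [log_mul (exp_pos _).ne' hb.ne', log_exp] at hlog
    rw [← EReal.coe_add, EReal.coe_le_coe_iff]
    calc (n : ℝ)⁻¹ * log (a n) ≤ (n : ℝ)⁻¹ * (n * η + log (b n)) := by gcongr
      _ = η + (n : ℝ)⁻¹ * log (b n) := by field_simp
  refine (limsup_le_limsup hev).trans ?_
  refine (EReal.limsup_add_le (u := fun _ => (η : EReal)) ?_ ?_).trans_eq ?_ <;>
    simp [growthRate]

theorem growthRate_mono {a b : ℕ → ℝ} (ha : ∀ n, 0 < a n) (h : ∀ n, a n ≤ b n) :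
    growthRate a ≤ growthRate b :=
  limsup_le_limsup (Eventually.of_forall fun n => EReal.coe_le_coe_iff.2
    (mul_le_mul_of_nonneg_left (log_le_log (ha n) (h n)) (by positivity)))

theorem growthRate_eq_zero {a : ℕ → ℝ} (h : ∀ᶠ n in atTop, a n = 0) : growthRate a = 0 :=
  (limsup_congr (v := fun _ => 0) (h.mono fun n hn => by simp [hn])).trans (limsup_const 0)

/-- Greedy selection: repeatedly keep an element of maximal weight and discard its
`R`-neighbourhood. -/
theorem Finset.exists_subset_pairwise_not_rel_sum_le {α : Type*} [DecidableEq α]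
    {R : α → α → Prop} [DecidableRel R] (hrefl : ∀ x, R x x) (hsymm : ∀ x y, R x y → R y x)
    {wt : α → ℝ} (hwt : ∀ a, 0 ≤ wt a) {D : ℝ} (E : Finset α)
    (hD : ∀ x ∈ E, (#{y ∈ E | R x y} : ℝ) ≤ D) :
    ∃ E' ⊆ E, (E' : Set α).Pairwise (fun x y => ¬ R x y) ∧
      ∑ a ∈ E, wt a ≤ D * ∑ a ∈ E', wt a := by
  induction E using Finset.strongInduction with
  | H E ih =>
  rcases E.eq_empty_or_nonempty with rfl | hne
  · exact ⟨∅, empty_subset _, by simp, by simp⟩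
  obtain ⟨x, hxE, hmax⟩ := exists_max_image E wt hne
  set N := {y ∈ E | R x y}
  have hNE : N ⊆ E := filter_subset _ _
  obtain ⟨E', hE'sub, hE', hsum⟩ := ih (E \ N) (sdiff_ssubset hNE ⟨x, mem_filter.2 ⟨hxE, hrefl x⟩⟩)
    fun a ha => le_trans (by gcongr; exact sdiff_subset) (hD a (mem_sdiff.1 ha).1)
  have hfar : ∀ y ∈ E', ¬ R x y := fun y hy hR =>
    (mem_sdiff.1 (hE'sub hy)).2 (mem_filter.2 ⟨(mem_sdiff.1 (hE'sub hy)).1, hR⟩)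
  have hxE' : x ∉ E' := fun h => hfar x h (hrefl x)
  refine ⟨insert x E', insert_subset hxE (hE'sub.trans sdiff_subset), ?_, ?_⟩
  · rw [coe_insert]
    exact hE'.insert fun y hy _ => ⟨hfar y hy, fun h => hfar y hy (hsymm _ _ h)⟩
  have hN : ∑ a ∈ N, wt a ≤ D * wt x :=
    calc ∑ a ∈ N, wt a ≤ #N • wt x := sum_le_card_nsmul _ _ _ fun a ha => hmax a (hNE ha)
      _ ≤ D * wt x := by
        rw [nsmul_eq_mul]
        exact mul_le_mul_of_nonneg_right (hD x hxE) (hwt x)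
  calc ∑ a ∈ E, wt a = ∑ a ∈ E \ N, wt a + ∑ a ∈ N, wt a := (sum_sdiff hNE).symm
    _ ≤ D * ∑ a ∈ E', wt a + D * wt x := add_le_add hsum hN
    _ = D * ∑ a ∈ insert x E', wt a := by rw [sum_insert hxE']; ring

/-- Chernoff-type bound: each counted word has weight `t ^ k * t⁻¹ ^ #{i | (g i).isSome} ≥ 1`,
and the total weight of all words is `t ^ k * (1 + card α / t) ^ n`. -/
theorem card_filter_card_isSome_le {α : Type*} [Fintype α] (n k : ℕ) {t : ℝ} (ht : 1 ≤ t) :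
    (#{g : Fin n → Option α | #{i | (g i).isSome} ≤ k} : ℝ) ≤
      t ^ k * (1 + Fintype.card α / t) ^ n := by
  have ht0 : 0 < t := one_pos.trans_le ht
  set wt : Option α → ℝ := fun o => if o.isSome then t⁻¹ else 1
  have hwt : ∀ o, 0 ≤ wt o := fun o => by unfold wt; split_ifs <;> positivity
  have hprod : ∀ g : Fin n → Option α, ∏ i, wt (g i) = t⁻¹ ^ #{i | (g i).isSome} := fun g => by
    simp only [wt, prod_ite, prod_const, one_pow, mul_one]
  have hone : ∀ g ∈ ({g | #{i | (g i).isSome} ≤ k} : Finset (Fin n → Option α)),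
      (1 : ℝ) ≤ t ^ k * ∏ i, wt (g i) := fun g hg => by
    rw [hprod]
    calc (1 : ℝ) = t ^ #{i | (g i).isSome} * t⁻¹ ^ #{i | (g i).isSome} := by
          rw [← mul_pow, mul_inv_cancel₀ ht0.ne', one_pow]
      _ ≤ t ^ k * t⁻¹ ^ #{i | (g i).isSome} :=
          mul_le_mul_of_nonneg_right (pow_le_pow_right₀ ht (mem_filter.1 hg).2) (by positivity)
  have hsum : ∑ o, wt o = 1 + Fintype.card α / t := by
    simp [wt, Fintype.sum_option, div_eq_mul_inv]
  calc (#{g : Fin n → Option α | #{i | (g i).isSome} ≤ k} : ℝ)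
      = ∑ g ∈ ({g | #{i | (g i).isSome} ≤ k} : Finset (Fin n → Option α)), 1 := by
        rw [sum_const, nsmul_one]
    _ ≤ ∑ g ∈ ({g | #{i | (g i).isSome} ≤ k} : Finset (Fin n → Option α)),
          t ^ k * ∏ i, wt (g i) := sum_le_sum hone
    _ ≤ ∑ g : Fin n → Option α, t ^ k * ∏ i, wt (g i) :=
          sum_le_sum_of_subset_of_nonneg (subset_univ _)
            fun _ _ _ => mul_nonneg (by positivity) (prod_nonneg fun _ _ => hwt _)
    _ = t ^ k * (1 + Fintype.card α / t) ^ n := by rw [← mul_sum, ← Fintype.sum_pow, hsum]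

theorem pow_floor_mul_le_exp {t r K : ℝ} (ht : 1 ≤ t) (hr : 0 ≤ r) (hK : 0 ≤ K) (n : ℕ) :
    t ^ ⌊r * n⌋₊ * (1 + K / t) ^ n ≤ exp (n * (r * log t + K / t)) := by
  have ht0 : 0 < t := one_pos.trans_le ht
  have h1 : t ^ ⌊r * n⌋₊ ≤ exp (n * (r * log t)) := by
    rw [← exp_log (pow_pos ht0 _), log_pow, exp_le_exp]
    calc (⌊r * n⌋₊ : ℝ) * log t ≤ r * n * log t :=
          mul_le_mul_of_nonneg_right (Nat.floor_le (by positivity)) (log_nonneg ht)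
      _ = n * (r * log t) := by ring
  have h2 : (1 + K / t) ^ n ≤ exp (n * (K / t)) := by
    rw [exp_nat_mul, add_comm]
    exact pow_le_pow_left₀ (by positivity) (add_one_le_exp _) n
  rw [mul_add, exp_add]
  exact mul_le_mul h1 h2 (by positivity) (exp_pos _).le

section FreeSemigroupAction

variable {X ι : Type*}

theorem continuous_fw [TopologicalSpace X] {f : ι → X → X} (hf : ∀ i, Continuous (f i))
    (w : List ι) : Continuous (fw f w) := by
  induction w with
  | nil => exact continuous_id
  | cons a w ih => exact ih.comp (hf a)

theorem mul_le_Sw {f : ι → X → X} {φ : X → ℝ} {b : ℝ} (hb : ∀ x, b ≤ φ x) (w : List ι)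
    (x : X) : w.length * b ≤ Sw f φ w x := by
  unfold Sw
  simpa using card_nsmul_le_sum (range w.length) _ b fun i _ => hb (fw f (w.take i) x)

variable [MetricSpace X] {f : ι → X → X} {φ : X → ℝ} {w : List ι}

theorem Sw_le_add_of_forall_dist_le {δ η : ℝ} (hmod : ∀ a b, dist a b ≤ δ → |φ a - φ b| ≤ η)
    {x y : X} (h : ∀ i < w.length, dist (fw f (w.take i) x) (fw f (w.take i) y) ≤ δ) :
    Sw f φ w x ≤ w.length * η + Sw f φ w y := by
  have : ∑ i ∈ range w.length, (φ (fw f (w.take i) x) - φ (fw f (w.take i) y)) ≤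
      ∑ _i ∈ range w.length, η :=
    sum_le_sum fun i hi => (abs_le.1 (hmod _ _ (h i (mem_range.1 hi)))).2
  rw [sum_sub_distrib, sum_const, card_range, nsmul_eq_mul] at this
  unfold Sw
  linarith

/-- `rSep f w ε r E` says `r * |w| < farCount f w ε x y` for distinct `x y ∈ E`. -/
noncomputable def farCount (f : ι → X → X) (w : List ι) (ε : ℝ) (x y : X) : ℕ :=
  #{i ∈ range w.length | ε ≤ dist (fw f (w.take i) x) (fw f (w.take i) y)}

theorem farCount_comm (ε : ℝ) (x y : X) : farCount f w ε x y = farCount f w ε y x := by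
  simp only [farCount, dist_comm]

theorem farCount_self {ε : ℝ} (hε : 0 < ε) (x : X) : farCount f w ε x x = 0 := by
  simp [farCount, hε]

theorem rSep.mono {ε r r' : ℝ} {E : Finset X} (hE : rSep f w ε r' E) (hr : r ≤ r') :
    rSep f w ε r E := fun x hx y hy hxy =>
  (mul_le_mul_of_nonneg_right hr (Nat.cast_nonneg _)).trans_lt (hE x hx y hy hxy)

theorem rSep.sep0 {ε ε' r : ℝ} {E : Finset X} (hE : rSep f w ε r E) (hr : 0 ≤ r)
    (hε' : ε' < ε) : sep0 f w ε' E := by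
  intro x hx y hy hxy
  have hpos : 0 < farCount f w ε x y := by
    exact_mod_cast (by positivity : (0 : ℝ) ≤ r * w.length).trans_lt (hE x hx y hy hxy)
  obtain ⟨i, hi⟩ := card_pos.1 hpos
  rw [mem_filter, mem_range] at hi
  exact ⟨i, hi.1, hε'.trans_le hi.2⟩

theorem sep0_insert [DecidableEq X] {ε : ℝ} {E : Finset X} {x : X} (hE : sep0 f w ε E)
    (hx : ∀ y ∈ E, ∃ i < w.length, ε < dist (fw f (w.take i) x) (fw f (w.take i) y)) :
    sep0 f w ε (insert x E) := by
  intro a ha b hb hab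
  rcases mem_insert.1 ha with rfl | ha' <;> rcases mem_insert.1 hb with rfl | hb'
  · exact absurd rfl hab
  · exact hx b hb'
  · simpa only [dist_comm] using hx a ha'
  · exact hE a ha' b hb' hab

theorem exists_injOn_of_sep0_of_span0 {ε δ : ℝ} {E F : Finset X} (hδ : 2 * δ ≤ ε)
    (hE : sep0 f w ε E) (hF : span0 f w δ F) :
    ∃ g : X → X, (∀ x, g x ∈ F) ∧
      (∀ x, ∀ i < w.length, dist (fw f (w.take i) x) (fw f (w.take i) (g x)) ≤ δ) ∧
      Set.InjOn g E := by
  choose g hgF hg using hF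
  refine ⟨g, hgF, hg, fun x hx y hy hxy => by_contra fun hne => ?_⟩
  obtain ⟨i, hi, hlt⟩ := hE x hx y hy hne
  have hx' := hg x i hi
  rw [hxy] at hx'
  linarith [hg y i hi,
    dist_triangle_right (fw f (w.take i) x) (fw f (w.take i) y) (fw f (w.take i) (g y))]

theorem card_le_of_sep0_of_span0 {ε δ : ℝ} {E F : Finset X} (hδ : 2 * δ ≤ ε)
    (hE : sep0 f w ε E) (hF : span0 f w δ F) : #E ≤ #F := by
  obtain ⟨g, hgF, -, hinj⟩ := exists_injOn_of_sep0_of_span0 hδ hE hF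
  exact card_le_card_of_injOn g (fun x _ => hgF x) hinj

theorem sum_exp_Sw_le_of_sep0_of_span0 {ε δ η : ℝ} {E F : Finset X} (hδ : 2 * δ ≤ ε)
    (hmod : ∀ a b, dist a b ≤ δ → |φ a - φ b| ≤ η) (hE : sep0 f w ε E) (hF : span0 f w δ F) :
    ∑ x ∈ E, exp (Sw f φ w x) ≤ exp (w.length * η) * ∑ y ∈ F, exp (Sw f φ w y) := by
  classical
  obtain ⟨g, hgF, hg, hinj⟩ := exists_injOn_of_sep0_of_span0 hδ hE hF
  calc ∑ x ∈ E, exp (Sw f φ w x)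
      ≤ ∑ x ∈ E, exp (w.length * η) * exp (Sw f φ w (g x)) := by
        gcongr with x
        rw [← exp_add]
        exact exp_le_exp.2 (Sw_le_add_of_forall_dist_le hmod (hg x))
    _ = exp (w.length * η) * ∑ y ∈ E.image g, exp (Sw f φ w y) := by
        rw [sum_image hinj, mul_sum]
    _ ≤ exp (w.length * η) * ∑ y ∈ F, exp (Sw f φ w y) := by
        refine mul_le_mul_of_nonneg_left ?_ (exp_pos _).le
        exact sum_le_sum_of_subset_of_nonneg (image_subset_iff.2 fun x _ => hgF x)
          fun _ _ _ => (exp_pos _).le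

theorem card_filter_farCount_le {α : Type*} [Fintype α] {c : X → α} {ε r t : ℝ}
    (hc : ∀ a b, c a = c b → dist a b ≤ ε) {E : Finset X} (hE : sep0 f w ε E) (x : X)
    (ht : 1 ≤ t) :
    (#{y ∈ E | (farCount f w (ε / 2) x y : ℝ) ≤ r * w.length} : ℝ) ≤
      t ^ ⌊r * w.length⌋₊ * (1 + Fintype.card α / t) ^ w.length := by
  classical
  -- at each time where `y` is `ε / 2`-far from `x`, record the cell of `c` it visits
  set code : X → Fin w.length → Option α := fun y i =>
    if ε / 2 ≤ dist (fw f (w.take i) x) (fw f (w.take i) y) then some (c (fw f (w.take i) y))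
    else none
  have hcard : ∀ y, #{i | (code y i).isSome} = farCount f w (ε / 2) x y := fun y => by
    rw [farCount, card_filter, card_filter, ← Fin.sum_univ_eq_sum_range]
    refine sum_congr rfl fun i _ => ?_
    simp only [code]
    split_ifs <;> simp_all
  set S : Finset X := {y ∈ E | (farCount f w (ε / 2) x y : ℝ) ≤ r * w.length}
  have hinj : Set.InjOn code S := by
    intro y hy y' hy' hyy'
    by_contra hne
    obtain ⟨i, hi, hlt⟩ := hE y (mem_filter.1 hy).1 y' (mem_filter.1 hy').1 hne
    have h := congrFun hyy' ⟨i, hi⟩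
    simp only [code] at h
    split_ifs at h with h1 h2 h2
    · linarith [hc _ _ (Option.some_injective _ h)]
    · linarith [dist_triangle_left (fw f (w.take i) y) (fw f (w.take i) y') (fw f (w.take i) x)]
  refine le_trans ?_ (card_filter_card_isSome_le (α := α) w.length _ ht)
  exact_mod_cast card_le_card_of_injOn code (fun y hy => mem_filter.2 ⟨mem_univ _,
    by rw [hcard]; exact Nat.le_floor (mem_filter.1 hy).2⟩) hinj

theorem Qws_nonneg (ε r : ℝ) : 0 ≤ Qws f φ w ε r :=
  Real.sSup_nonneg (by rintro _ ⟨E, -, rfl⟩; positivity)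

theorem Qw0_le_sum_exp_Sw {ε : ℝ} {F : Finset X} (hF : span0 f w ε F) :
    Qw0 f φ w ε ≤ ∑ y ∈ F, exp (Sw f φ w y) :=
  csInf_le ⟨0, by rintro _ ⟨F, -, rfl⟩; positivity⟩ ⟨F, hF, rfl⟩

section Compact

variable [CompactSpace X]

theorem exists_span0 (hf : ∀ i, Continuous (f i)) (w : List ι) {ε : ℝ} (hε : 0 < ε) :
    ∃ F : Finset X, span0 f w ε F := by
  obtain ⟨t, ht⟩ := isCompact_univ.elim_finite_subcover
    (fun y : X => ⋂ i : Fin w.length, fw f (w.take i) ⁻¹' Metric.ball (fw f (w.take i) y) ε)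
    (fun y => isOpen_iInter_of_finite fun i =>
      (continuous_fw hf _).isOpen_preimage _ Metric.isOpen_ball)
    (fun x _ => Set.mem_iUnion.2 ⟨x, Set.mem_iInter.2 fun i => Metric.mem_ball_self hε⟩)
  refine ⟨t, fun x => ?_⟩
  obtain ⟨y, hy, hxy⟩ := Set.mem_iUnion₂.1 (ht (Set.mem_univ x))
  exact ⟨y, hy, fun i hi => (Metric.mem_ball.1 (Set.mem_iInter.1 hxy ⟨i, hi⟩)).le⟩

/-- A maximal `(w, ε)`-separated set is `(w, ε)`-spanning. -/
theorem exists_sep0_span0 (hf : ∀ i, Continuous (f i)) (w : List ι) {ε : ℝ} (hε : 0 < ε) :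
    ∃ E : Finset X, sep0 f w ε E ∧ span0 f w ε E := by
  classical
  obtain ⟨F, hF⟩ := exists_span0 hf w (half_pos hε)
  set S := {k | ∃ E : Finset X, sep0 f w ε E ∧ #E = k}
  have hS : S.Nonempty := ⟨0, ∅, fun x hx => absurd hx (notMem_empty x), rfl⟩
  have hbdd : BddAbove S :=
    ⟨#F, by rintro _ ⟨E, hE, rfl⟩; exact card_le_of_sep0_of_span0 (by linarith) hE hF⟩
  obtain ⟨E, hE, hEmax⟩ := Nat.sSup_mem hS hbdd
  refine ⟨E, hE, fun x => ?_⟩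
  by_contra! hx
  have hxE : x ∉ E := fun h => by
    obtain ⟨i, -, hi⟩ := hx x h
    simp only [dist_self] at hi
    linarith
  have := le_csSup hbdd ⟨insert x E, sep0_insert hE hx, rfl⟩
  rw [card_insert_of_notMem hxE, hEmax] at this
  omega

theorem exists_finite_code {ε : ℝ} (hε : 0 < ε) :
    ∃ (F : Finset X) (c : X → F), ∀ a b, c a = c b → dist a b ≤ ε := by
  obtain ⟨t, -, ht, hcover⟩ := finite_cover_balls_of_compact (isCompact_univ (X := X)) (half_pos hε)
  have : ∀ a, ∃ p ∈ ht.toFinset, dist a p < ε / 2 := fun a => by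
    simpa using hcover (Set.mem_univ a)
  choose c hcF hc using this
  refine ⟨ht.toFinset, fun a => ⟨c a, hcF a⟩, fun a b hab => ?_⟩
  have hb := hc b
  rw [← show c a = c b from congrArg Subtype.val hab] at hb
  linarith [dist_triangle_right a b (c a), hc a]

theorem exists_pos_modulus (hφ : Continuous φ) {ε η : ℝ} (hε : 0 < ε) (hη : 0 < η) :
    ∃ δ > 0, 2 * δ < ε ∧ ∀ a b, dist a b ≤ δ → |φ a - φ b| ≤ η := by
  obtain ⟨δ, hδ, hmod⟩ :=
    Metric.uniformContinuous_iff.1 (CompactSpace.uniformContinuous_of_continuous hφ) η hη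
  refine ⟨min (δ / 2) (ε / 4), by positivity, by linarith [min_le_right (δ / 2) (ε / 4)],
    fun a b hab => ?_⟩
  have := hmod (hab.trans_lt ((min_le_left _ _).trans_lt (half_lt_self hδ)))
  rw [Real.dist_eq] at this
  exact this.le

theorem bddAbove_rSep_sums (hf : ∀ i, Continuous (f i)) (hφ : Continuous φ) {ε r : ℝ}
    (hε : 0 < ε) (hr : 0 ≤ r) :
    BddAbove {s | ∃ E : Finset X, rSep f w ε r E ∧ s = ∑ x ∈ E, exp (Sw f φ w x)} := by
  obtain ⟨δ, hδ, hδε, hmod⟩ := exists_pos_modulus hφ hε one_pos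
  obtain ⟨F, hF⟩ := exists_span0 hf w hδ
  refine ⟨exp (w.length * 1) * ∑ y ∈ F, exp (Sw f φ w y), ?_⟩
  rintro _ ⟨E, hE, rfl⟩
  exact sum_exp_Sw_le_of_sep0_of_span0 le_rfl hmod (hE.sep0 hr hδε) hF

theorem sum_exp_Sw_le_Qws (hf : ∀ i, Continuous (f i)) (hφ : Continuous φ) {ε r : ℝ}
    (hε : 0 < ε) (hr : 0 ≤ r) {E : Finset X} (hE : rSep f w ε r E) :
    ∑ x ∈ E, exp (Sw f φ w x) ≤ Qws f φ w ε r :=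
  le_csSup (bddAbove_rSep_sums hf hφ hε hr) ⟨E, hE, rfl⟩

theorem Qws_pos [Nonempty X] (hf : ∀ i, Continuous (f i)) (hφ : Continuous φ) {ε r : ℝ}
    (hε : 0 < ε) (hr : 0 ≤ r) : 0 < Qws f φ w ε r := by
  have hsep : rSep f w ε r {Classical.arbitrary X} := fun x hx y hy hxy =>
    absurd ((mem_singleton.1 hx).trans (mem_singleton.1 hy).symm) hxy
  have := sum_exp_Sw_le_Qws hf hφ hε hr hsep
  rw [sum_singleton] at this
  exact (exp_pos _).trans_le this

theorem Qws_anti (hf : ∀ i, Continuous (f i)) (hφ : Continuous φ) {ε r r' : ℝ} (hε : 0 < ε)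
    (hr : 0 ≤ r) (hrr' : r ≤ r') : Qws f φ w ε r' ≤ Qws f φ w ε r :=
  Real.sSup_le (by rintro _ ⟨E, hE, rfl⟩; exact sum_exp_Sw_le_Qws hf hφ hε hr (hE.mono hrr'))
    (Qws_nonneg ε r)

theorem le_Qw0 (hf : ∀ i, Continuous (f i)) {ε c : ℝ} (hε : 0 < ε)
    (h : ∀ F, span0 f w ε F → c ≤ ∑ y ∈ F, exp (Sw f φ w y)) : c ≤ Qw0 f φ w ε := by
  obtain ⟨F, hF⟩ := exists_span0 hf w hε
  exact le_csInf ⟨_, F, hF, rfl⟩ (by rintro _ ⟨F, hF, rfl⟩; exact h F hF)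

theorem Qw0_pos [Nonempty X] (hf : ∀ i, Continuous (f i)) (hφ : Continuous φ) {ε : ℝ}
    (hε : 0 < ε) : 0 < Qw0 f φ w ε := by
  obtain ⟨b, hb⟩ := (isCompact_range hφ).bddBelow
  refine (exp_pos (w.length * b)).trans_le (le_Qw0 hf hε fun F hF => ?_)
  obtain ⟨y, hy, -⟩ := hF (Classical.arbitrary X)
  exact (exp_le_exp.2 (mul_le_Sw (fun x => hb ⟨x, rfl⟩) w y)).trans
    (single_le_sum (fun z _ => (exp_pos _).le) hy)

theorem Qws_le_exp_mul_Qw0 (hf : ∀ i, Continuous (f i)) {ε r δ η : ℝ} (hr : 0 ≤ r)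
    (hδ : 0 < δ) (hδε : 2 * δ < ε) (hmod : ∀ a b, dist a b ≤ δ → |φ a - φ b| ≤ η) :
    Qws f φ w ε r ≤ exp (w.length * η) * Qw0 f φ w δ := by
  refine Real.sSup_le ?_ (mul_nonneg (exp_pos _).le (Real.sInf_nonneg ?_))
  · rintro _ ⟨E, hE, rfl⟩
    rw [← div_le_iff₀' (exp_pos _)]
    exact le_Qw0 hf hδ fun F hF => (div_le_iff₀' (exp_pos _)).2
      (sum_exp_Sw_le_of_sep0_of_span0 le_rfl hmod (hE.sep0 hr hδε) hF)
  · rintro _ ⟨F, -, rfl⟩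
    positivity

theorem sum_exp_Sw_le_mul_Qws (hf : ∀ i, Continuous (f i)) (hφ : Continuous φ) {α : Type*}
    [Fintype α] {c : X → α} {ε r t : ℝ} (hc : ∀ a b, c a = c b → dist a b ≤ ε) (hε : 0 < ε)
    (hr : 0 ≤ r) (ht : 1 ≤ t) {E : Finset X} (hE : sep0 f w ε E) :
    ∑ x ∈ E, exp (Sw f φ w x) ≤
      t ^ ⌊r * w.length⌋₊ * (1 + Fintype.card α / t) ^ w.length * Qws f φ w (ε / 2) r := by
  classical
  have ht0 : 0 < t := one_pos.trans_le ht
  obtain ⟨E', -, hE', hsum⟩ := exists_subset_pairwise_not_rel_sum_le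
    (R := fun x y => (farCount f w (ε / 2) x y : ℝ) ≤ r * w.length)
    (fun x => by simp only [farCount_self (half_pos hε), CharP.cast_eq_zero]; positivity)
    (fun x y h => by rwa [farCount_comm]) (fun x => (exp_pos (Sw f φ w x)).le) E
    fun x _ => card_filter_farCount_le hc hE x ht
  refine hsum.trans (mul_le_mul_of_nonneg_left ?_ (by positivity))
  exact sum_exp_Sw_le_Qws hf hφ (half_pos hε) hr fun x hx y hy hxy => not_le.1 (hE' hx hy hxy)

theorem Qw0_le_mul_Qws (hf : ∀ i, Continuous (f i)) (hφ : Continuous φ) {α : Type*}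
    [Fintype α] {c : X → α} {ε r t : ℝ} (hc : ∀ a b, c a = c b → dist a b ≤ ε) (hε : 0 < ε)
    (hr : 0 ≤ r) (ht : 1 ≤ t) :
    Qw0 f φ w ε ≤
      t ^ ⌊r * w.length⌋₊ * (1 + Fintype.card α / t) ^ w.length * Qws f φ w (ε / 2) r := by
  obtain ⟨E, hEsep, hEspan⟩ := exists_sep0_span0 hf w hε
  exact (Qw0_le_sum_exp_Sw hEspan).trans (sum_exp_Sw_le_mul_Qws hf hφ hc hε hr ht hEsep)

end Compact

end FreeSemigroupAction

section Pressure

variable {X ι : Type*} [MetricSpace X] [Fintype ι] {f : ι → X → X} {φ : X → ℝ}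

theorem P0_eq_iSup_growthRate :
    P0 f φ = ⨆ ε ∈ Set.Ioi 0, growthRate fun n => Qn0 f φ n ε := rfl

theorem Qns_eq_zero (h : IsEmpty X ∨ IsEmpty ι) {n : ℕ} (hn : n ≠ 0) (ε r : ℝ) :
    Qns f φ n ε r = 0 := by
  rcases h with hX | hι
  · have hQws : ∀ w : List ι, Qws f φ w ε r = 0 := fun w =>
      le_antisymm (Real.sSup_nonpos (by rintro _ ⟨E, -, rfl⟩; simp [eq_empty_of_isEmpty E]))
        (Qws_nonneg ε r)
    simp [Qns, hQws]
  · have : IsEmpty (Fin n → ι) := isEmpty_fun.2 ⟨⟨⟨0, Nat.pos_of_ne_zero hn⟩⟩, hι⟩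
    simp [Qns]

theorem Qn0_eq_zero (h : IsEmpty X ∨ IsEmpty ι) {n : ℕ} (hn : n ≠ 0) (ε : ℝ) :
    Qn0 f φ n ε = 0 := by
  rcases h with hX | hι
  · have hQw0 : ∀ w : List ι, Qw0 f φ w ε = 0 := fun w =>
      le_antisymm (Real.sInf_nonpos (by rintro _ ⟨E, -, rfl⟩; simp [eq_empty_of_isEmpty E]))
        (Real.sInf_nonneg (by rintro _ ⟨E, -, rfl⟩; simp [eq_empty_of_isEmpty E]))
    simp [Qn0, hQw0]
  · have : IsEmpty (Fin n → ι) := isEmpty_fun.2 ⟨⟨⟨0, Nat.pos_of_ne_zero hn⟩⟩, hι⟩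
    simp [Qn0]

theorem Ps_eq_zero (h : IsEmpty X ∨ IsEmpty ι) (r : ℝ) : Ps f φ r = 0 := by
  have hPse : ∀ ε, Pse f φ ε r = 0 := fun ε =>
    growthRate_eq_zero ((eventually_ne_atTop 0).mono fun n hn => Qns_eq_zero h hn ε r)
  simp only [Ps, hPse]
  exact biSup_const Set.nonempty_Ioi

theorem P0_eq_zero (h : IsEmpty X ∨ IsEmpty ι) : P0 f φ = 0 := by
  have hQn0 : ∀ ε, (growthRate fun n => Qn0 f φ n ε) = 0 := fun ε =>
    growthRate_eq_zero ((eventually_ne_atTop 0).mono fun n hn => Qn0_eq_zero h hn ε)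
  simp only [P0_eq_iSup_growthRate, hQn0]
  exact biSup_const Set.nonempty_Ioi

variable [CompactSpace X]

theorem Qns_anti (hf : ∀ i, Continuous (f i)) (hφ : Continuous φ) {ε r r' : ℝ} (hε : 0 < ε)
    (hr : 0 ≤ r) (hrr' : r ≤ r') (n : ℕ) : Qns f φ n ε r' ≤ Qns f φ n ε r := by
  unfold Qns
  gcongr with σ
  exact Qws_anti hf hφ hε hr hrr'

theorem Qns_le_exp_mul_Qn0 (hf : ∀ i, Continuous (f i)) {ε r δ η : ℝ} (hr : 0 ≤ r)
    (hδ : 0 < δ) (hδε : 2 * δ < ε) (hmod : ∀ a b, dist a b ≤ δ → |φ a - φ b| ≤ η) (n : ℕ) :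
    Qns f φ n ε r ≤ exp (n * η) * Qn0 f φ n δ := by
  rw [Qns, Qn0, mul_left_comm, mul_sum _ _ (exp _)]
  gcongr with σ
  simpa using Qws_le_exp_mul_Qw0 (w := List.ofFn σ) hf hr hδ hδε hmod

theorem exists_Qn0_le_exp_mul_Qns (hf : ∀ i, Continuous (f i)) (hφ : Continuous φ)
    {ε η : ℝ} (hε : 0 < ε) (hη : 0 < η) :
    ∃ r > 0, ∀ n : ℕ, Qn0 f φ n ε ≤ exp (n * η) * Qns f φ n (ε / 2) r := by
  obtain ⟨F, c, hc⟩ := exists_finite_code (X := X) hε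
  set K : ℝ := (Fintype.card F : ℝ)
  -- with `t = 1 + 2K/η` and `r = η / (2 log t + 1)`, both `r log t` and `K / t` are `≤ η / 2`
  set t : ℝ := 1 + 2 * K / η
  have ht : 1 ≤ t := le_add_of_nonneg_right (by positivity)
  set r := η / (2 * log t + 1)
  have hlogt := log_nonneg ht
  have hr : 0 < r := by positivity
  have hrate : r * log t + K / t ≤ η := by
    have h1 : r * (2 * log t + 1) = η := div_mul_cancel₀ η (by positivity)
    have h2 : K / t ≤ η / 2 := by
      have : η / 2 * t = η / 2 + K := by
        simp only [t]
        field_simp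
      rw [div_le_iff₀ (by positivity), this]
      linarith
    nlinarith
  refine ⟨r, hr, fun n => ?_⟩
  rw [Qns, Qn0, mul_left_comm, mul_sum _ _ (exp _)]
  gcongr with σ
  calc Qw0 f φ (List.ofFn σ) ε
      ≤ t ^ ⌊r * n⌋₊ * (1 + K / t) ^ n * Qws f φ (List.ofFn σ) (ε / 2) r := by
        simpa only [List.length_ofFn] using Qw0_le_mul_Qws (w := List.ofFn σ) hf hφ hc hε hr.le ht
    _ ≤ exp (n * η) * Qws f φ (List.ofFn σ) (ε / 2) r := by
        refine mul_le_mul_of_nonneg_right ?_ (Qws_nonneg _ _)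
        exact (pow_floor_mul_le_exp ht hr.le (by positivity) n).trans (by gcongr)

variable [Nonempty X] [Nonempty ι]

theorem Qns_pos (hf : ∀ i, Continuous (f i)) (hφ : Continuous φ) {ε r : ℝ} (hε : 0 < ε)
    (hr : 0 ≤ r) (n : ℕ) : 0 < Qns f φ n ε r :=
  mul_pos (by positivity) (sum_pos (fun _ _ => Qws_pos hf hφ hε hr) univ_nonempty)

theorem Qn0_pos (hf : ∀ i, Continuous (f i)) (hφ : Continuous φ) {ε : ℝ} (hε : 0 < ε)
    (n : ℕ) : 0 < Qn0 f φ n ε :=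
  mul_pos (by positivity) (sum_pos (fun _ _ => Qw0_pos hf hφ hε) univ_nonempty)

theorem Ps_le_P0 (hf : ∀ i, Continuous (f i)) (hφ : Continuous φ) {r : ℝ} (hr : 0 ≤ r) :
    Ps f φ r ≤ P0 f φ := by
  refine iSup₂_le fun ε hε => EReal.le_of_forall_pos_le_coe_add fun η hη => ?_
  obtain ⟨δ, hδ, hδε, hmod⟩ := exists_pos_modulus hφ hε hη
  calc Pse f φ ε r ≤ η + growthRate fun n => Qn0 f φ n δ :=
        growthRate_le_add (Qns_pos hf hφ hε hr) (Qns_le_exp_mul_Qn0 hf hr hδ hδε hmod)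
    _ ≤ η + P0 f φ := by
        gcongr
        exact le_iSup₂ (f := fun δ (_ : δ ∈ Set.Ioi 0) => growthRate fun n => Qn0 f φ n δ) δ hδ

theorem P0_le_iSup_Ps (hf : ∀ i, Continuous (f i)) (hφ : Continuous φ) :
    P0 f φ ≤ ⨆ r ∈ Set.Ioi 0, Ps f φ r := by
  refine iSup₂_le fun ε hε => EReal.le_of_forall_pos_le_coe_add fun η hη => ?_
  obtain ⟨r, hr, hQ⟩ := exists_Qn0_le_exp_mul_Qns hf hφ hε hη
  calc (growthRate fun n => Qn0 f φ n ε) ≤ η + Pse f φ (ε / 2) r :=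
        growthRate_le_add (Qn0_pos hf hφ hε) hQ
    _ ≤ η + ⨆ r ∈ Set.Ioi 0, Ps f φ r := by
        gcongr
        exact (le_iSup₂ (f := fun ε (_ : ε ∈ Set.Ioi 0) => Pse f φ ε r) (ε / 2)
          (Set.mem_Ioi.2 (half_pos hε))).trans
          (le_iSup₂ (f := fun r (_ : r ∈ Set.Ioi 0) => Ps f φ r) r hr)

theorem Ps_antitoneOn (hf : ∀ i, Continuous (f i)) (hφ : Continuous φ) :
    AntitoneOn (Ps f φ) (Set.Ioi 0) := fun _ hr _ _ hrr' =>
  iSup₂_mono fun _ hε => growthRate_mono (Qns_pos hf hφ hε (le_of_lt hr |>.trans hrr'))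
    (Qns_anti hf hφ hε (le_of_lt hr) hrr')

end Pressure

theorem tendsto_Ps_pressure
    {X : Type*} [MetricSpace X] [CompactSpace X] {m : ℕ}
    (f : Fin m → X → X) (hf : ∀ i, Continuous (f i))
    (φ : X → ℝ) (hφ : Continuous φ) :
    Filter.Tendsto (fun r : ℝ => Ps f φ r)
      (nhdsWithin (0 : ℝ) (Set.Ioi 0)) (nhds (P0 f φ)) := by
  by_cases h : IsEmpty X ∨ IsEmpty (Fin m)
  · simp only [Ps_eq_zero h, P0_eq_zero h]
    exact tendsto_const_nhds
  obtain ⟨hX, hm⟩ : Nonempty X ∧ Nonempty (Fin m) := by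
    simpa only [not_or, not_isEmpty_iff] using h
  have hP0 : ⨆ r ∈ Set.Ioi 0, Ps f φ r = P0 f φ :=
    le_antisymm (iSup₂_le fun r hr => Ps_le_P0 hf hφ (le_of_lt hr)) (P0_le_iSup_Ps hf hφ)
  have hlim := (Ps_antitoneOn hf hφ).tendsto_nhdsGT (OrderTop.bddAbove _)
  rwa [sSup_image, hP0] at hlim
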